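/- For every integer n ≥ 1, there is an index k with k ≤ ⌈(log n)/(log(6/5))⌉ such that the k-th word of the Kolakoski fan has length |w_k| ≥ n. Consequently, the least k with |w_k| ≥ n is at most ⌈(log n)/(log(6/5))⌉, i.e., it is O(log n). -/

import Mathlib

/-- Expansion step of the Kolakoski fan: the `i`-th run of `expand w` has length
equal to the `i`-th letter of `w`, the runs alternating between blocks of `1`s
and blocks of `2`s, starting with a block of `1`s. -/
def expand (w : List ℕ) : List ℕ :=
  (List.range w.length).flatMap fun i =>
    List.replicate (w.getD i 0) (if i % 2 = 0 then 1 else 2)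

/-- The Kolakoski fan: `fan 0 = 122` and `fan (k+1) = expand (fan k)`
(so `fan 1 = 12211`). -/
def fan : ℕ → List ℕ
  | 0 => [1, 2, 2]
  | k + 1 => expand (fan k)

/-! The length of `fan (k + 1)` is the letter sum of `fan k`. All letters are at least `1`, and the
odd-indexed runs of `expand w` consist of `2`s, so the letter sum of `expand w` exceeds that of `w`
by at least `⌊|w| / 2⌋`. Hence `L k = |fan k|` satisfies `L (k + 2) ≥ L (k + 1) + ⌊L k / 2⌋`; as
`(6/5)² < 6/5 + 1/2`, with room to absorb the rounding, induction gives `L k ≥ 3 (6/5)^k`, and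
`(6/5)^K ≥ n` for `K = ⌈log n / log (6/5)⌉`. -/

open Finset

lemma List.map_getD_range_length {α : Type*} (w : List α) (d : α) :
    (List.range w.length).map (w.getD · d) = w :=
  List.ext_getElem (by simp) fun _ _ h => by simp [List.getElem?_eq_getElem h]

lemma List.sum_map_range {M : Type*} [AddCommMonoid M] (n : ℕ) (f : ℕ → M) :
    ((List.range n).map f).sum = ∑ i ∈ Finset.range n, f i :=
  rfl

lemma List.sum_eq_sum_range_getD {M : Type*} [AddCommMonoid M] (w : List M) :
    w.sum = ∑ i ∈ Finset.range w.length, w.getD i 0 := by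
  conv_lhs => rw [← w.map_getD_range_length 0]
  exact List.sum_map_range _ _

lemma length_expand (w : List ℕ) : (expand w).length = w.sum := by
  rw [expand, List.length_flatMap, List.sum_map_range, w.sum_eq_sum_range_getD]
  simp

lemma sum_expand (w : List ℕ) :
    (expand w).sum = ∑ i ∈ range w.length, w.getD i 0 * if i % 2 = 0 then 1 else 2 := by
  rw [expand, List.flatMap, List.sum_flatten, List.map_map, List.sum_map_range]
  simp

lemma sum_range_ite_mod_two (m : ℕ) : ∑ i ∈ range m, (if i % 2 = 0 then 0 else 1) = m / 2 := by
  induction m with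
  | zero => rfl
  | succ m ih => rw [sum_range_succ, ih]; split <;> omega

lemma sum_add_length_div_two_le_sum_expand {w : List ℕ} (hw : ∀ x ∈ w, 1 ≤ x) :
    w.sum + w.length / 2 ≤ (expand w).sum := by
  rw [sum_expand, w.sum_eq_sum_range_getD, ← sum_range_ite_mod_two, ← sum_add_distrib]
  refine sum_le_sum fun i hi => ?_
  have : 1 ≤ w.getD i 0 := hw _ (by simp [List.getElem?_eq_getElem (mem_range.mp hi)])
  split <;> omega

lemma one_le_of_mem_fan {k x : ℕ} (hx : x ∈ fan k) : 1 ≤ x := by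
  cases k with
  | zero => revert x; decide
  | succ k =>
    obtain ⟨i, -, hx⟩ := List.mem_flatMap.mp hx
    have := List.eq_of_mem_replicate hx
    split at this <;> omega

lemma le_length_fan_add_two (k : ℕ) :
    (fan (k + 1)).length + (fan k).length / 2 ≤ (fan (k + 2)).length := by
  rw [fan, length_expand, fan, length_expand]
  exact sum_add_length_div_two_le_sum_expand fun _ => one_le_of_mem_fan

lemma three_mul_six_pow_le_of_add_half_le {L : ℕ → ℕ} (h₀ : 3 ≤ L 0) (h₁ : 4 ≤ L 1)
    (hL : ∀ k, L (k + 1) + L k / 2 ≤ L (k + 2)) (k : ℕ) : 3 * 6 ^ k ≤ 5 ^ k * L k := by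
  induction k using Nat.twoStepInduction with
  | zero => simpa
  | one => omega
  | more k ih ih' =>
    have hstep : 2 * L (k + 1) + L k ≤ 2 * L (k + 2) + 1 := by have := hL k; omega
    have hpow : 5 ^ k ≤ 6 ^ k := Nat.pow_le_pow_left (by norm_num) k
    have hscaled := Nat.mul_le_mul_left (5 ^ k) hstep
    rw [pow_succ, pow_succ] at ih'
    rw [pow_add, pow_add]
    generalize 5 ^ k = a at *
    generalize 6 ^ k = b at *
    linarith

lemma six_div_five_pow_le_length_fan (k : ℕ) : (6 / 5 : ℝ) ^ k ≤ (fan k).length := by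
  have h := three_mul_six_pow_le_of_add_half_le (L := fun k => (fan k).length)
    (by decide) (by decide) le_length_fan_add_two k
  have h' : (3 * 6 ^ k : ℝ) ≤ 5 ^ k * (fan k).length := by exact_mod_cast h
  rw [div_pow, div_le_iff₀ (by positivity)]
  nlinarith [pow_pos (show (0 : ℝ) < 6 by norm_num) k]

lemma le_pow_ceil_log_div_log (x : ℝ) {b : ℝ} (hb : 1 < b) :
    x ≤ b ^ ⌈Real.log x / Real.log b⌉₊ :=
  calc x ≤ Real.exp (Real.log x) := Real.le_exp_log x
    _ ≤ Real.exp (⌈Real.log x / Real.log b⌉₊ * Real.log b) :=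
      Real.exp_le_exp.mpr ((div_le_iff₀ (Real.log_pos hb)).mp (Nat.le_ceil _))
    _ = b ^ ⌈Real.log x / Real.log b⌉₊ := by
      rw [Real.exp_nat_mul, Real.exp_log (by linarith)]

theorem fan_reaches_n_in_log_steps_general (n : ℕ) :
    (∃ k : ℕ, k ≤ ⌈Real.log n / Real.log (6 / 5)⌉₊ ∧ n ≤ (fan k).length) ∧
    sInf {k : ℕ | n ≤ (fan k).length} ≤ ⌈Real.log n / Real.log (6 / 5)⌉₊ := by
  set K := ⌈Real.log n / Real.log (6 / 5)⌉₊
  have hK : n ≤ (fan K).length := by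
    exact_mod_cast (le_pow_ceil_log_div_log n (by norm_num)).trans
      (six_div_five_pow_le_length_fan K)
  exact ⟨⟨K, le_rfl, hK⟩, Nat.sInf_le hK⟩

/-- For every `n ≥ 1` there is an index
`k ≤ ⌈log n / log (6/5)⌉` whose fan word has length at least `n`; consequently
the least such index is at most `⌈log n / log (6/5)⌉`, i.e. it is `O(log n)`. -/
theorem fan_reaches_n_in_log_steps (n : ℕ) (hn : 1 ≤ n) :
    (∃ k : ℕ, k ≤ ⌈Real.log n / Real.log (6 / 5)⌉₊ ∧ n ≤ (fan k).length) ∧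
    sInf {k : ℕ | n ≤ (fan k).length} ≤ ⌈Real.log n / Real.log (6 / 5)⌉₊ :=
  fan_reaches_n_in_log_steps_general n
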